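/- arXiv:1401.2859 — 2 statements merged into one kernel-verified Lean document; each statement's English description precedes it below -/
import Mathlib

section
/- Let d≥1, λ∈(0,1) and a∈Ω. Let u:ℤ^d→ℝ be absolutely summable (u∈ℓ¹(ℤ^d)), let f:ℤ^d→ℝ be absolutely summable, and suppose ∇*(a∇u)(x)=f(x) for all x∈ℤ^d. For M>0 define the truncation v_M(x):=min{max{u(x),0},M}. Then λ Σ_{e∈𝔼^d} (∇v_M(e))² ≤ Σ_{x∈ℤ^d} v_M(x) f(x) ≤ M Σ_{x∈ℤ^d} |f(x)| (in particular all these sums converge). -/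
open MeasureTheory Filter

/-- Vertices of the lattice `ℤ^d`. -/
abbrev V (d : ℕ) : Type := Fin d → ℤ

/-- Edges of `ℤ^d`: the pair `(x, i)` represents the edge `[x, x + eᵢ]`. -/
abbrev Edge (d : ℕ) : Type := V d × Fin d

/-- The `i`-th standard basis vector of `ℤ^d`. -/
def unitV (d : ℕ) (i : Fin d) : V d := fun j => if j = i then 1 else 0

/-- Discrete gradient of a scalar field along an edge:
`∇ζ([x,x+eᵢ]) = ζ(x+eᵢ) - ζ(x)`. -/
noncomputable def dGrad {d : ℕ} (ζ : V d → ℝ) (e : Edge d) : ℝ :=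
  ζ (e.1 + unitV d e.2) - ζ e.1

/-- The discrete elliptic operator `(∇*(a∇u))(x)`. -/
noncomputable def aDiv {d : ℕ} (a : Edge d → ℝ) (u : V d → ℝ) (x : V d) : ℝ :=
  ∑ i : Fin d, (a (x - unitV d i, i) * (u x - u (x - unitV d i))
    - a (x, i) * (u (x + unitV d i) - u x))

/-- `a ∈ Ω = [λ,1]^{𝔼^d}`: a uniformly elliptic coefficient field. -/
def IsCoeff {d : ℕ} (lam : ℝ) (a : Edge d → ℝ) : Prop :=
  ∀ e, a e ∈ Set.Icc lam 1

/-- Euclidean norm of a lattice vector. -/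
noncomputable def vnorm {d : ℕ} (x : V d) : ℝ :=
  Real.sqrt (∑ j, ((x j : ℝ)) ^ 2)

/-- Midpoint (in `ℝ^d`) of an edge. -/
noncomputable def eMid {d : ℕ} (e : Edge d) : Fin d → ℝ :=
  fun j => (e.1 j : ℝ) + (if j = e.2 then (1 : ℝ)/2 else 0)

/-- Distance `|e - y|` from the midpoint of the edge `e - y` to the origin,
i.e. the distance from the midpoint of `e` to the vertex `y`. -/
noncomputable def edistEV {d : ℕ} (e : Edge d) (y : V d) : ℝ :=
  Real.sqrt (∑ j, (eMid e j - (y j : ℝ)) ^ 2)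

/-- Distance `|e - b|` between the midpoints of the edges `e` and `b`. -/
noncomputable def edistEE {d : ℕ} (e b : Edge d) : ℝ :=
  Real.sqrt (∑ j, (eMid e j - eMid b j) ^ 2)

/-- The edge `e` shifted by the vector `z`. -/
def shiftE {d : ℕ} (e : Edge d) (z : V d) : Edge d := (e.1 + z, e.2)

/-- Stationarity of an ensemble: for every `z ∈ ℤ^d`, the shifted field `a(·+z)`
has the same law as `a`. -/
def Stationary {d : ℕ} (μ : Measure (Edge d → ℝ)) : Prop :=
  ∀ z : V d, Measure.map (fun a : Edge d → ℝ => fun e => a (shiftE e z)) μ = μ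

/-- `g` is the elliptic Green function of the coefficient field `a`:
it decays at infinity and solves `∇*(a∇g(·,y))(x) = δ(x-y)`. -/
def IsGreenOf {d : ℕ} (a : Edge d → ℝ) (g : V d → V d → ℝ) : Prop :=
  (∀ y, Tendsto (fun x => g x y) cofinite (nhds 0)) ∧
  (∀ x y, aDiv a (fun x' => g x' y) x = if x = y then (1 : ℝ) else 0)

/-- `G` is the (a-dependent) elliptic Green function: Borel measurable in `a`,
and for each `a ∈ Ω` the Green function of `a`. -/
def IsEllGreen {d : ℕ} (lam : ℝ) (G : (Edge d → ℝ) → V d → V d → ℝ) : Prop :=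
  (∀ x y, Measurable fun a => G a x y) ∧
  (∀ a, IsCoeff lam a → IsGreenOf a (G a))

/-- Derivative of the elliptic Green function in its first variable along the edge `e`. -/
noncomputable def gradG1 {d : ℕ} (G : (Edge d → ℝ) → V d → V d → ℝ)
    (a : Edge d → ℝ) (e : Edge d) (y : V d) : ℝ :=
  dGrad (fun x => G a x y) e

/-- Mixed second derivative of the elliptic Green function: first variable along `e`,
second variable along `b`. -/
noncomputable def gradG2 {d : ℕ} (G : (Edge d → ℝ) → V d → V d → ℝ)
    (a : Edge d → ℝ) (e b : Edge d) : ℝ :=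
  dGrad (fun x => dGrad (fun y => G a x y) b) e

/-- `G` is the (a-dependent) parabolic Green function: Borel measurable in `a`, bounded,
with initial datum `δ(x-y)`, solving `d/dt G(t,x,y) = -(∇*(a∇G(t,·,y)))(x)` for `t > 0`. -/
def IsParGreen {d : ℕ} (lam : ℝ) (G : (Edge d → ℝ) → ℝ → V d → V d → ℝ) : Prop :=
  (∀ t x y, Measurable fun a => G a t x y) ∧
  (∀ a, IsCoeff lam a → ∃ M : ℝ, ∀ t x y, 0 ≤ t → |G a t x y| ≤ M) ∧
  (∀ a, IsCoeff lam a → ∀ x y, G a 0 x y = if x = y then (1 : ℝ) else 0) ∧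
  (∀ a, IsCoeff lam a → ∀ t : ℝ, 0 < t → ∀ x y,
    HasDerivAt (fun s => G a s x y) (-(aDiv a (fun x' => G a t x' y) x)) t)

/-- `η(t,r) = r·arsinh(r/t) − (√(t²+r²) − t)`. -/
noncomputable def eta (t r : ℝ) : ℝ :=
  r * Real.arsinh (r / t) - (Real.sqrt (t ^ 2 + r ^ 2) - t)

/-!
Summation by parts turns `∑ₓ v_M f` into the edge sum `∑ₑ ∇v_M · a∇u`. Truncation is monotone and
1-Lipschitz, so edgewise `(∇v_M)² ≤ ∇v_M · ∇u`, and `a ≥ λ` gives the lower bound. The upper bound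
is `|v_M| ≤ M`. All series converge absolutely because `∇u` and `f` are summable and `v_M` is bounded.
-/

theorem sq_sub_le_mul_sub_of_monotone_of_lipschitzWith {φ : ℝ → ℝ} (hmono : Monotone φ)
    (hlip : LipschitzWith 1 φ) (s t : ℝ) : (φ s - φ t) ^ 2 ≤ (φ s - φ t) * (s - t) := by
  have hprod : 0 ≤ (φ s - φ t) * (s - t) := by
    rcases le_total t s with h | h
    · exact mul_nonneg (sub_nonneg.2 (hmono h)) (sub_nonneg.2 h)
    · exact mul_nonneg_of_nonpos_of_nonpos (sub_nonpos.2 (hmono h)) (sub_nonpos.2 h)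
  have hdist : |φ s - φ t| ≤ |s - t| := by
    simpa [Real.dist_eq] using hlip.dist_le_mul s t
  calc (φ s - φ t) ^ 2 = |φ s - φ t| * |φ s - φ t| := by rw [sq, abs_mul_abs_self]
    _ ≤ |φ s - φ t| * |s - t| := mul_le_mul_of_nonneg_left hdist (abs_nonneg _)
    _ = (φ s - φ t) * (s - t) := by rw [← abs_mul, abs_of_nonneg hprod]

theorem monotone_truncate (M : ℝ) : Monotone fun r : ℝ => min (max r 0) M :=
  (monotone_id.max monotone_const).min monotone_const

theorem lipschitzWith_truncate (M : ℝ) : LipschitzWith 1 fun r : ℝ => min (max r 0) M :=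
  (LipschitzWith.id.max_const 0).min_const M

theorem abs_truncate_le {M : ℝ} (hM : 0 ≤ M) (r : ℝ) : |min (max r 0) M| ≤ M := by
  rw [abs_of_nonneg (le_min (le_max_right r 0) hM)]
  exact min_le_right _ _

section BoundedTimesSummable

variable {ι : Type*} {v w : ι → ℝ} {C : ℝ}

theorem summable_mul_of_abs_le (hv : ∀ i, |v i| ≤ C) (hw : Summable fun i => |w i|) :
    Summable fun i => v i * w i :=
  (hw.mul_left C).of_norm_bounded fun i => by
    rw [Real.norm_eq_abs, abs_mul]
    exact mul_le_mul_of_nonneg_right (hv i) (abs_nonneg _)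

theorem tsum_mul_le_of_abs_le (hv : ∀ i, |v i| ≤ C) (hw : Summable fun i => |w i|) :
    ∑' i, v i * w i ≤ C * ∑' i, |w i| := by
  rw [← tsum_mul_left]
  refine (summable_mul_of_abs_le hv hw).tsum_le_tsum (fun i => ?_) (hw.mul_left C)
  calc v i * w i ≤ |v i| * |w i| := by rw [← abs_mul]; exact le_abs_self _
    _ ≤ C * |w i| := mul_le_mul_of_nonneg_right (hv i) (abs_nonneg _)

end BoundedTimesSummable

def edgeSuccEquiv (d : ℕ) : Edge d ≃ Edge d where
  toFun e := (e.1 + unitV d e.2, e.2)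
  invFun e := (e.1 - unitV d e.2, e.2)
  left_inv e := by simp
  right_inv e := by simp

section Lattice

variable {d : ℕ}

/-- `∇* q`, the formal adjoint of `dGrad`. -/
noncomputable def dDiv (q : Edge d → ℝ) (x : V d) : ℝ :=
  ∑ i : Fin d, (q (x - unitV d i, i) - q (x, i))

theorem aDiv_eq_dDiv (a : Edge d → ℝ) (u : V d → ℝ) :
    aDiv a u = dDiv fun e => a e * dGrad u e := by
  funext x
  simp only [aDiv, dDiv, dGrad, sub_add_cancel]

theorem IsCoeff.abs_le_one {lam : ℝ} {a : Edge d → ℝ} (ha : IsCoeff lam a) (hlam : 0 ≤ lam)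
    (e : Edge d) : |a e| ≤ 1 :=
  abs_le.2 ⟨by linarith [(ha e).1], (ha e).2⟩

theorem abs_dGrad_le {v : V d → ℝ} {C : ℝ} (hv : ∀ x, |v x| ≤ C) (e : Edge d) :
    |dGrad v e| ≤ 2 * C := by
  rw [dGrad]
  linarith [abs_sub (v (e.1 + unitV d e.2)) (v e.1), hv (e.1 + unitV d e.2), hv e.1]

theorem summable_abs_comp_fst {g : V d → ℝ} (hg : Summable fun x => |g x|) :
    Summable fun e : Edge d => |g e.1| := by
  simpa using hg.mul_of_nonneg (Summable.of_finite (f := fun _ : Fin d => (1 : ℝ)))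
    (fun _ => abs_nonneg _) (fun _ => zero_le_one)

theorem summable_abs_dGrad {u : V d → ℝ} (hu : Summable fun x => |u x|) :
    Summable fun e : Edge d => |dGrad u e| := by
  have hsrc := summable_abs_comp_fst hu
  exact .of_nonneg_of_le (fun _ => abs_nonneg _) (fun e => abs_sub _ _)
    (((edgeSuccEquiv d).summable_iff.2 hsrc).add hsrc)

theorem tsum_mul_dDiv {v : V d → ℝ} {q : Edge d → ℝ} {C : ℝ} (hv : ∀ x, |v x| ≤ C)
    (hq : Summable fun e => |q e|) :
    ∑' x, v x * dDiv q x = ∑' e, dGrad v e * q e := by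
  set σ := edgeSuccEquiv d
  have hsrc : Summable fun e : Edge d => v e.1 * q e := summable_mul_of_abs_le (fun e => hv e.1) hq
  have htgt : Summable fun e : Edge d => v (σ e).1 * q e := summable_mul_of_abs_le (fun e => hv _) hq
  have htgt' : Summable fun e : Edge d => v e.1 * q (σ.symm e) := by
    simpa [Function.comp_def] using σ.symm.summable_iff.2 htgt
  calc ∑' x, v x * dDiv q x
      = ∑' x, ∑' i, (v x * q (σ.symm (x, i)) - v x * q (x, i)) := by
        refine tsum_congr fun x => ?_
        rw [tsum_fintype, dDiv, Finset.mul_sum]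
        simp only [mul_sub]
        rfl
    _ = ∑' e, (v e.1 * q (σ.symm e) - v e.1 * q e) :=
        ((htgt'.sub hsrc).tsum_prod' fun _ => .of_finite).symm
    _ = ∑' e, v e.1 * q (σ.symm e) - ∑' e, v e.1 * q e := htgt'.tsum_sub hsrc
    _ = ∑' e, v (σ e).1 * q e - ∑' e, v e.1 * q e := by
        rw [← σ.symm.tsum_eq fun e => v (σ e).1 * q e]
        simp only [Equiv.apply_symm_apply]
    _ = ∑' e, dGrad v e * q e := by
        rw [← htgt.tsum_sub hsrc]
        simp only [dGrad, sub_mul]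
        rfl

theorem mul_sq_dGrad_comp_le {lam : ℝ} {a : Edge d → ℝ} (ha : IsCoeff lam a) (hlam : 0 ≤ lam)
    {φ : ℝ → ℝ} (hmono : Monotone φ) (hlip : LipschitzWith 1 φ) (u : V d → ℝ) (e : Edge d) :
    lam * dGrad (φ ∘ u) e ^ 2 ≤ dGrad (φ ∘ u) e * (a e * dGrad u e) := by
  have hsq : dGrad (φ ∘ u) e ^ 2 ≤ dGrad (φ ∘ u) e * dGrad u e :=
    sq_sub_le_mul_sub_of_monotone_of_lipschitzWith hmono hlip _ _
  calc lam * dGrad (φ ∘ u) e ^ 2 ≤ a e * dGrad (φ ∘ u) e ^ 2 :=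
        mul_le_mul_of_nonneg_right (ha e).1 (sq_nonneg _)
    _ ≤ a e * (dGrad (φ ∘ u) e * dGrad u e) := mul_le_mul_of_nonneg_left hsq (hlam.trans (ha e).1)
    _ = dGrad (φ ∘ u) e * (a e * dGrad u e) := by ring

end Lattice

theorem truncation_energy_estimate_general
    (d : ℕ) (lam : ℝ) (hlam : lam ∈ Set.Ioo (0 : ℝ) 1)
    (a : Edge d → ℝ) (ha : IsCoeff lam a)
    (u f : V d → ℝ)
    (hu : Summable fun x => |u x|) (hf : Summable fun x => |f x|)
    (heq : ∀ x, aDiv a u x = f x)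
    (M : ℝ) (hM : 0 < M)
    (vM : V d → ℝ) (hvM : ∀ x, vM x = min (max (u x) 0) M) :
    Summable (fun e : Edge d => (dGrad vM e) ^ 2) ∧
    Summable (fun x : V d => vM x * f x) ∧
    lam * (∑' e : Edge d, (dGrad vM e) ^ 2) ≤ (∑' x : V d, vM x * f x) ∧
    (∑' x : V d, vM x * f x) ≤ M * ∑' x : V d, |f x| := by
  have hv_comp : vM = (fun r => min (max r 0) M) ∘ u := funext hvM
  have hv_bdd : ∀ x, |vM x| ≤ M := fun x => hvM x ▸ abs_truncate_le hM.le (u x)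
  have hflux : Summable fun e => |a e * dGrad u e| :=
    (summable_mul_of_abs_le (ha.abs_le_one hlam.1.le) (summable_abs_dGrad hu)).abs
  have hcross : Summable fun e => dGrad vM e * (a e * dGrad u e) :=
    summable_mul_of_abs_le (abs_dGrad_le hv_bdd) hflux
  have hgreen : ∑' x, vM x * f x = ∑' e, dGrad vM e * (a e * dGrad u e) := by
    rw [← tsum_mul_dDiv hv_bdd hflux, ← aDiv_eq_dDiv]
    simp only [heq]
  have hpointwise : ∀ e, lam * dGrad vM e ^ 2 ≤ dGrad vM e * (a e * dGrad u e) := fun e =>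
    hv_comp ▸ mul_sq_dGrad_comp_le ha hlam.1.le (monotone_truncate M) (lipschitzWith_truncate M) u e
  have henergy : Summable fun e => dGrad vM e ^ 2 :=
    .of_nonneg_of_le (fun _ => sq_nonneg _) (fun e => (le_inv_mul_iff₀ hlam.1).2 (hpointwise e))
      (hcross.mul_left lam⁻¹)
  refine ⟨henergy, summable_mul_of_abs_le hv_bdd hf, ?_, tsum_mul_le_of_abs_le hv_bdd hf⟩
  rw [hgreen, ← tsum_mul_left]
  exact (henergy.mul_left lam).tsum_le_tsum hpointwise hcross

/-- energy estimate for the truncation `v_M = min(max(u,0),M)`: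
`λ Σ_e (∇v_M(e))² ≤ Σ_x v_M(x) f(x) ≤ M Σ_x |f(x)|`. -/
theorem truncation_energy_estimate
    (d : ℕ) (hd : 1 ≤ d) (lam : ℝ) (hlam : lam ∈ Set.Ioo (0 : ℝ) 1)
    (a : Edge d → ℝ) (ha : IsCoeff lam a)
    (u f : V d → ℝ)
    (hu : Summable fun x => |u x|) (hf : Summable fun x => |f x|)
    (heq : ∀ x, aDiv a u x = f x)
    (M : ℝ) (hM : 0 < M)
    (vM : V d → ℝ) (hvM : ∀ x, vM x = min (max (u x) 0) M) :
    Summable (fun e : Edge d => (dGrad vM e) ^ 2) ∧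
    Summable (fun x : V d => vM x * f x) ∧
    lam * (∑' e : Edge d, (dGrad vM e) ^ 2) ≤ (∑' x : V d, vM x * f x) ∧
    (∑' x : V d, vM x * f x) ≤ M * ∑' x : V d, |f x| :=
  truncation_energy_estimate_general d lam hlam a ha u f hu hf heq M hM vM hvM
end

section
/- Discrete Caccioppoli estimate: let d≥1, λ∈(0,1) and a∈Ω. Let η:ℤ^d→[0,∞) have finite support, let u:ℤ^d→ℝ, and suppose ∇*(a∇u)(x)=0 for every x∈ℤ^d with η(x)≠0. Then λ Σ_{e∈𝔼^d} (∇(ηu)(e))² ≤ Σ_{b=[x,y]∈𝔼^d} u(x) u(y) a(b) (∇η(b))², where (ηu)(x)=η(x)u(x); in particular the right-hand side is nonnegative. -/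
open MeasureTheory Filter

/-- discrete Caccioppoli estimate
`λ Σ_e (∇(ηu)(e))² ≤ Σ_{b=[x,y]} u(x)u(y) a(b) (∇η(b))²` (Step 3 of the proof of Lemma 1). -/
theorem discrete_caccioppoli
    (d : ℕ) (hd : 1 ≤ d) (lam : ℝ) (hlam : lam ∈ Set.Ioo (0 : ℝ) 1)
    (a : Edge d → ℝ) (ha : IsCoeff lam a)
    (η : V d → ℝ) (hηnn : ∀ x, 0 ≤ η x) (hηfin : (Function.support η).Finite)
    (u : V d → ℝ) (hharm : ∀ x, η x ≠ 0 → aDiv a u x = 0) :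
    lam * (∑' e : Edge d, (dGrad (fun x => η x * u x) e) ^ 2)
        ≤ (∑' b : Edge d, u b.1 * u (b.1 + unitV d b.2) * a b * (dGrad η b) ^ 2) ∧
    0 ≤ ∑' b : Edge d, u b.1 * u (b.1 + unitV d b.2) * a b * (dGrad η b) ^ 2 := by
  classical
  set w : V d → ℝ := fun x => η x * u x with hw
  set φ : V d → ℝ := fun x => η x ^ 2 * u x with hφ
  set S : Finset (V d) := hηfin.toFinset with hS
  set E : Finset (Edge d) := (S ×ˢ Finset.univ) ∪
    Finset.image (fun e : Edge d => (e.1 - unitV d e.2, e.2)) (S ×ˢ Finset.univ) with hE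
  have hmemS : ∀ x, η x ≠ 0 → x ∈ S := fun x hx => hηfin.mem_toFinset.mpr hx
  have hEnot : ∀ e : Edge d, e ∉ E → η e.1 = 0 ∧ η (e.1 + unitV d e.2) = 0 := by
    intro e he
    constructor
    · by_contra h
      exact he (Finset.mem_union_left _
        (Finset.mem_product.mpr ⟨hmemS _ h, Finset.mem_univ _⟩))
    · by_contra h
      apply he
      apply Finset.mem_union_right
      refine Finset.mem_image.mpr ⟨(e.1 + unitV d e.2, e.2),
        Finset.mem_product.mpr ⟨hmemS _ h, Finset.mem_univ _⟩, ?_⟩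
      simp
  -- basic vanishing off E
  have hwzero : ∀ e : Edge d, e ∉ E → dGrad w e = 0 := by
    intro e he
    obtain ⟨h1, h2⟩ := hEnot e he
    simp [dGrad, hw, h1, h2]
  have hηezero : ∀ e : Edge d, e ∉ E → dGrad η e = 0 := by
    intro e he
    obtain ⟨h1, h2⟩ := hEnot e he
    simp [dGrad, h1, h2]
  -- named functions
  set A : Edge d → ℝ := fun e => a e * (dGrad w e) ^ 2 with hA
  set B : Edge d → ℝ := fun b => u b.1 * u (b.1 + unitV d b.2) * a b * (dGrad η b) ^ 2 with hB
  set F1 : Edge d → ℝ := fun e => a e * dGrad u e * φ (e.1 + unitV d e.2) with hF1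
  set F2 : Edge d → ℝ := fun e => a e * dGrad u e * φ e.1 with hF2
  have hφη : ∀ x, φ x ≠ 0 → η x ≠ 0 := by
    intro x hx h0
    apply hx; simp [hφ, h0]
  have hsumSq : Summable fun e : Edge d => (dGrad w e) ^ 2 :=
    summable_of_ne_finset_zero (s := E) (fun e he => by rw [hwzero e he]; ring)
  have hsumA : Summable A :=
    summable_of_ne_finset_zero (s := E) (fun e he => by simp only [hA]; rw [hwzero e he]; ring)
  have hsumB : Summable B :=
    summable_of_ne_finset_zero (s := E) (fun e he => by simp only [hB]; rw [hηezero e he]; ring)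
  have hsumF1 : Summable F1 := by
    apply summable_of_ne_finset_zero (s := E)
    intro e he
    have h0 : φ (e.1 + unitV d e.2) = 0 := by
      simp [hφ, (hEnot e he).2]
    simp only [hF1, h0]; ring
  have hsumF2 : Summable F2 := by
    apply summable_of_ne_finset_zero (s := E)
    intro e he
    have h0 : φ e.1 = 0 := by simp [hφ, (hEnot e he).1]
    simp only [hF2, h0]; ring
  -- the shift equiv
  let σ : Edge d ≃ Edge d :=
  { toFun := fun e => (e.1 + unitV d e.2, e.2)
    invFun := fun e => (e.1 - unitV d e.2, e.2)
    left_inv := fun e => by simp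
    right_inv := fun e => by simp }
  set D : Edge d → ℝ := fun e => F1 (σ.symm e) - F2 e with hD
  have hsumF1' : Summable fun e => F1 (σ.symm e) := (σ.symm.summable_iff).mpr hsumF1
  have hsumD : Summable D := hsumF1'.sub hsumF2
  -- the divergence sum vanishes
  have hDzero : ∑' e, D e = 0 := by
    have hDsum : ∑' e : Edge d, D e = ∑' x : V d, ∑' i : Fin d, D (x, i) :=
      Summable.tsum_prod' hsumD (fun x => Summable.of_finite)
    rw [hDsum]
    have : ∀ x : V d, ∑' i : Fin d, D (x, i) = 0 := by
      intro x
      rw [tsum_fintype]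
      have hrepr : ∀ i : Fin d, D (x, i) =
          φ x * (a (x - unitV d i, i) * (u x - u (x - unitV d i))
            - a (x, i) * (u (x + unitV d i) - u x)) := by
        intro i
        have h1 : (σ.symm (x, i)) = (x - unitV d i, i) := rfl
        have h2 : x - unitV d i + unitV d i = x := by abel
        simp only [hD, hF1, hF2, h1, dGrad, h2]
        ring
      rw [Finset.sum_congr rfl (fun i _ => hrepr i), ← Finset.mul_sum]
      by_cases hx : φ x = 0
      · rw [hx]; ring
      · rw [show (∑ i : Fin d, (a (x - unitV d i, i) * (u x - u (x - unitV d i))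
            - a (x, i) * (u (x + unitV d i) - u x))) = aDiv a u x from rfl,
          hharm x (hφη x hx)]; ring
    rw [tsum_congr this]
    simp
  -- relate F-sums : ∑ F1 - ∑ F2 = 0
  have hF1eq : ∑' e, F1 (σ.symm e) = ∑' e, F1 e := σ.symm.tsum_eq F1
  have hFdiff : ∑' e, F1 e - ∑' e, F2 e = 0 := by
    rw [← hF1eq, ← Summable.tsum_sub hsumF1' hsumF2]
    exact hDzero
  -- pointwise algebraic identity: A - B = F1 - F2
  have hptwise : ∀ e : Edge d, A e - B e = F1 e - F2 e := by
    intro e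
    simp only [hA, hB, hF1, hF2, dGrad, hw, hφ]
    ring
  have hABdiff : ∑' e, A e - ∑' e, B e = 0 := by
    rw [← Summable.tsum_sub hsumA hsumB, tsum_congr hptwise, Summable.tsum_sub hsumF1 hsumF2]
    exact hFdiff
  have hAB : ∑' e, A e = ∑' e, B e := by linarith
  have hAnn : 0 ≤ ∑' e, A e := by
    apply tsum_nonneg
    intro e
    simp only [hA]
    exact mul_nonneg (le_trans (le_of_lt hlam.1) (ha e).1) (sq_nonneg _)
  constructor
  · rw [← hAB, ← tsum_mul_left]
    apply Summable.tsum_le_tsum _ (hsumSq.mul_left lam) hsumA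
    intro e
    simp only [hA]
    exact mul_le_mul_of_nonneg_right (ha e).1 (sq_nonneg _)
  · rw [← hAB]; exact hAnn
end
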